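/- arXiv:1904.08816 — 5 statements merged into one kernel-verified Lean document; each statement's English description precedes it below -/
import Mathlib

section
/- Equality in the data-processing inequality for Bayes error holds if and only if the kernel never mixes the two strict decision regions: ε*(Y) = ε*(X) if and only if for all x₁ with P₁·p_{X1}(x₁) > P₂·p_{X2}(x₁), all x₂ with P₁·p_{X1}(x₂) < P₂·p_{X2}(x₂), and all y, K(y|x₁)·K(y|x₂) = 0. -/
/-!
Since every column of `K` sums to one, `ε*(X) = ∑_y ∑_x K(y|x) · min (P₁ p₁ x) (P₂ p₂ x)`, and the
data-processing inequality is the termwise bound `∑ w·min(a, b) ≤ min (∑ w·a) (∑ w·b)` for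
`w = K(y|·)`. So equality holds iff it holds for every `y`. A minimum of two sums equals the sum of
the minima iff one summand dominates the other everywhere; for the weighted summands this says
that `K(y|·)` does not charge both strict decision regions.
-/

open Finset

theorem min_sum_eq_sum_min_iff {ι M : Type*} [Fintype ι] [AddCommMonoid M] [LinearOrder M]
    [IsOrderedCancelAddMonoid M] (f g : ι → M) :
    min (∑ i, f i) (∑ i, g i) = ∑ i, min (f i) (g i) ↔ (∀ i, f i ≤ g i) ∨ ∀ i, g i ≤ f i := by
  constructor
  · intro h
    rcases min_choice (∑ i, f i) (∑ i, g i) with hf | hg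
    · have := (sum_eq_sum_iff_of_le fun i _ ↦ min_le_left (f i) (g i)).1 (h.symm.trans hf)
      exact .inl fun i ↦ min_eq_left_iff.1 (this i (mem_univ i))
    · have := (sum_eq_sum_iff_of_le fun i _ ↦ min_le_right (f i) (g i)).1 (h.symm.trans hg)
      exact .inr fun i ↦ min_eq_right_iff.1 (this i (mem_univ i))
  · rintro (h | h)
    · simp only [min_eq_left (sum_le_sum fun i _ ↦ h i), min_eq_left (h _)]
    · simp only [min_eq_right (sum_le_sum fun i _ ↦ h i), min_eq_right (h _)]

theorem mul_le_mul_left_iff_eq_zero_or {R : Type*} [Semiring R] [LinearOrder R]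
    [IsStrictOrderedRing R] {w a b : R} (hw : 0 ≤ w) : w * a ≤ w * b ↔ w = 0 ∨ a ≤ b := by
  rcases hw.eq_or_lt with rfl | hw
  · simp
  · simp [mul_le_mul_iff_right₀ hw, hw.ne']

section WeightedMin

variable {ι R : Type*} [Fintype ι] [Ring R] [LinearOrder R] [IsStrictOrderedRing R]

theorem sum_mul_min_le_min_sum_mul (w a b : ι → R) (hw : ∀ i, 0 ≤ w i) :
    ∑ i, w i * min (a i) (b i) ≤ min (∑ i, w i * a i) (∑ i, w i * b i) :=
  le_min (sum_le_sum fun i _ ↦ mul_le_mul_of_nonneg_left (min_le_left _ _) (hw i))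
    (sum_le_sum fun i _ ↦ mul_le_mul_of_nonneg_left (min_le_right _ _) (hw i))

theorem sum_mul_min_eq_min_sum_mul_iff (w a b : ι → R) (hw : ∀ i, 0 ≤ w i) :
    ∑ i, w i * min (a i) (b i) = min (∑ i, w i * a i) (∑ i, w i * b i) ↔
      ∀ i j, b i < a i → a j < b j → w i * w j = 0 := by
  rw [eq_comm]
  simp only [mul_min_of_nonneg _ _ (hw _), min_sum_eq_sum_min_iff,
    mul_le_mul_left_iff_eq_zero_or (hw _), ← forall_or_right, ← forall_or_left, mul_eq_zero]
  refine forall_comm.trans <| forall₂_congr fun i j ↦ ?_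
  simp only [← not_lt]
  tauto

end WeightedMin

theorem bayes_error_dpi_equality_iff_general {X Y : Type*} [Fintype X] [Fintype Y]
    (P1 P2 : ℝ)
    (pX1 pX2 : X → ℝ)
    (K : Y → X → ℝ) (hK : ∀ y x, 0 ≤ K y x) (hKs : ∀ x, ∑ y, K y x = 1) :
    (∑ y, min (P1 * ∑ x, K y x * pX1 x) (P2 * ∑ x, K y x * pX2 x)
        = ∑ x, min (P1 * pX1 x) (P2 * pX2 x))
      ↔ ∀ x₁ x₂ y, P2 * pX2 x₁ < P1 * pX1 x₁ → P1 * pX1 x₂ < P2 * pX2 x₂ →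
          K y x₁ * K y x₂ = 0 := by
  have hX : ∑ x, min (P1 * pX1 x) (P2 * pX2 x)
      = ∑ y, ∑ x, K y x * min (P1 * pX1 x) (P2 * pX2 x) := by
    rw [sum_comm]
    simp only [← sum_mul, hKs, one_mul]
  have hY (y : Y) : min (P1 * ∑ x, K y x * pX1 x) (P2 * ∑ x, K y x * pX2 x)
      = min (∑ x, K y x * (P1 * pX1 x)) (∑ x, K y x * (P2 * pX2 x)) := by
    simp only [mul_sum, mul_left_comm]
  rw [hX, eq_comm, sum_eq_sum_iff_of_le fun y _ ↦ hY y ▸ sum_mul_min_le_min_sum_mul _ _ _ (hK y)]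
  simp only [mem_univ, true_imp_iff, hY, sum_mul_min_eq_min_sum_mul_iff _ _ _ (hK _)]
  exact forall_comm.trans (forall_congr' fun _ ↦ forall_comm)

/-- Equality in the Bayes-error data-processing inequality holds iff the kernel
never mixes the two strict decision regions. -/
theorem bayes_error_dpi_equality_iff {X Y : Type*} [Fintype X] [Fintype Y]
    (P1 P2 : ℝ) (hP1 : 0 ≤ P1) (hP2 : 0 ≤ P2) (hP : P1 + P2 = 1)
    (pX1 pX2 : X → ℝ) (h1 : ∀ x, 0 ≤ pX1 x) (h2 : ∀ x, 0 ≤ pX2 x)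
    (hs1 : ∑ x, pX1 x = 1) (hs2 : ∑ x, pX2 x = 1)
    (K : Y → X → ℝ) (hK : ∀ y x, 0 ≤ K y x) (hKs : ∀ x, ∑ y, K y x = 1) :
    (∑ y, min (P1 * ∑ x, K y x * pX1 x) (P2 * ∑ x, K y x * pX2 x)
        = ∑ x, min (P1 * pX1 x) (P2 * pX2 x))
      ↔ ∀ x₁ x₂ y, P2 * pX2 x₁ < P1 * pX1 x₁ → P1 * pX1 x₂ < P2 * pX2 x₂ →
          K y x₁ * K y x₂ = 0 :=
  bayes_error_dpi_equality_iff_general P1 P2 pX1 pX2 K hK hKs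
end

section
/- Total variation between two pmfs satisfies the data-processing inequality with equality characterization: for pmfs p, q on 𝒳 and a Markov kernel K, ∑_y |∑_x K(y|x)(p(x) − q(x))| ≤ ∑_x |p(x) − q(x)|, with equality iff for every y, the set {x : K(y|x) ≠ 0} does not contain both a point with p(x) > q(x) and a point with p(x) < q(x). -/
lemma abs_sum_eq_iff_aux {X : Type*} [Fintype X] (a : X → ℝ) :
    |∑ x, a x| = ∑ x, |a x| ↔ ¬((∃ x, 0 < a x) ∧ (∃ x, a x < 0)) := by
  constructor
  · intro h
    rintro ⟨⟨x1, h1⟩, ⟨x2, h2⟩⟩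
    have h3 : ∑ x, a x < ∑ x, |a x| :=
      Finset.sum_lt_sum (fun i _ => le_abs_self _)
        ⟨x2, Finset.mem_univ _, by rw [abs_of_neg h2]; linarith⟩
    have h4 : -(∑ x, a x) < ∑ x, |a x| := by
      rw [← Finset.sum_neg_distrib]
      exact Finset.sum_lt_sum (fun i _ => neg_le_abs _)
        ⟨x1, Finset.mem_univ _, by rw [abs_of_pos h1]; linarith⟩
    have := abs_lt.mpr ⟨by linarith, h3⟩
    linarith [this, h.ge]
  · intro h
    push_neg at h
    by_cases hc : ∃ x, 0 < a x
    · have hnn := h hc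
      rw [abs_of_nonneg (Finset.sum_nonneg fun i _ => hnn i)]
      exact Finset.sum_congr rfl fun i _ => (abs_of_nonneg (hnn i)).symm
    · push_neg at hc
      rw [abs_of_nonpos (Finset.sum_nonpos fun i _ => hc i), ← Finset.sum_neg_distrib]
      exact Finset.sum_congr rfl fun i _ => (abs_of_nonpos (hc i)).symm

/-- Total variation (unnormalized) satisfies the data-processing inequality under a
Markov kernel, with equality iff no output mixes points where `p > q` with points
where `p < q`. -/
theorem tv_data_processing {X Y : Type*} [Fintype X] [Fintype Y]
    (p q : X → ℝ)
    (K : Y → X → ℝ) (hK : ∀ y x, 0 ≤ K y x) (hKs : ∀ x, ∑ y, K y x = 1) :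
    (∑ y, |∑ x, K y x * (p x - q x)| ≤ ∑ x, |p x - q x|)
    ∧ ((∑ y, |∑ x, K y x * (p x - q x)| = ∑ x, |p x - q x|)
        ↔ ∀ y, ¬((∃ x, K y x ≠ 0 ∧ q x < p x) ∧ (∃ x, K y x ≠ 0 ∧ p x < q x))) := by
  have habs : ∀ y, ∑ x, |K y x * (p x - q x)| = ∑ x, K y x * |p x - q x| :=
    fun y => Finset.sum_congr rfl fun x _ => by
      rw [abs_mul, abs_of_nonneg (hK y x)]
  have hle : ∀ y, |∑ x, K y x * (p x - q x)| ≤ ∑ x, K y x * |p x - q x| :=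
    fun y => (Finset.abs_sum_le_sum_abs _ _).trans_eq (habs y)
  have hswap : ∑ y, ∑ x, K y x * |p x - q x| = ∑ x, |p x - q x| := by
    rw [Finset.sum_comm]
    exact Finset.sum_congr rfl fun x _ => by
      rw [← Finset.sum_mul, hKs x, one_mul]
  have hineq : ∑ y, |∑ x, K y x * (p x - q x)| ≤ ∑ x, |p x - q x| := by
    calc ∑ y, |∑ x, K y x * (p x - q x)| ≤ ∑ y, ∑ x, K y x * |p x - q x| :=
          Finset.sum_le_sum fun y _ => hle y
      _ = ∑ x, |p x - q x| := hswap
  refine ⟨hineq, ?_⟩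
  have hpos : ∀ y x, (K y x ≠ 0 ∧ q x < p x) ↔ 0 < K y x * (p x - q x) := by
    intro y x
    constructor
    · rintro ⟨h1, h2⟩
      exact mul_pos ((hK y x).lt_of_ne (Ne.symm h1)) (by linarith)
    · intro h
      have hK0 : K y x ≠ 0 := by
        rintro rfl0
        rw [rfl0, zero_mul] at h; exact lt_irrefl _ h
      have hd : 0 < p x - q x := by
        rcases lt_trichotomy (p x - q x) 0 with h' | h' | h'
        · nlinarith [hK y x]
        · rw [h', mul_zero] at h; exact absurd h (lt_irrefl _)
        · exact h'
      exact ⟨hK0, by linarith⟩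
  have hneg : ∀ y x, (K y x ≠ 0 ∧ p x < q x) ↔ K y x * (p x - q x) < 0 := by
    intro y x
    constructor
    · rintro ⟨h1, h2⟩
      exact mul_neg_of_pos_of_neg ((hK y x).lt_of_ne (Ne.symm h1)) (by linarith)
    · intro h
      have hK0 : K y x ≠ 0 := by
        rintro rfl0
        rw [rfl0, zero_mul] at h; exact lt_irrefl _ h
      have hd : p x - q x < 0 := by
        rcases lt_trichotomy (p x - q x) 0 with h' | h' | h'
        · exact h'
        · rw [h', mul_zero] at h; exact absurd h (lt_irrefl _)
        · nlinarith [hK y x]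
      exact ⟨hK0, by linarith⟩
  rw [← hswap]
  rw [Finset.sum_eq_sum_iff_of_le (fun y _ => hle y)]
  constructor
  · intro h y
    have hy := h y (Finset.mem_univ y)
    rw [← habs y] at hy
    have := (abs_sum_eq_iff_aux (fun x => K y x * (p x - q x))).mp hy
    rintro ⟨⟨x1, hx1⟩, ⟨x2, hx2⟩⟩
    exact this ⟨⟨x1, (hpos y x1).mp hx1⟩, ⟨x2, (hneg y x2).mp hx2⟩⟩
  · intro h y _
    rw [← habs y]
    refine (abs_sum_eq_iff_aux (fun x => K y x * (p x - q x))).mpr ?_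
    rintro ⟨⟨x1, hx1⟩, ⟨x2, hx2⟩⟩
    exact h y ⟨⟨x1, (hpos y x1).mpr hx1⟩, ⟨x2, (hneg y x2).mpr hx2⟩⟩
end

section
/- A deterministic map f : 𝒳 → 𝒴 preserves the Bayes error rate (ε*(f(X)) = ε*(X)) whenever f is injective; more generally, ε*(f(X)) = ε*(X) if f never identifies a point of the strict class-1 region {x : P₁p_{X1}(x) > P₂p_{X2}(x)} with a point of the strict class-2 region {x : P₁p_{X1}(x) < P₂p_{X2}(x)}. -/
lemma min_sum_eq {X : Type*} (s : Finset X) (a b : X → ℝ)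
    (h : (∀ x ∈ s, a x ≤ b x) ∨ (∀ x ∈ s, b x ≤ a x)) :
    min (∑ x ∈ s, a x) (∑ x ∈ s, b x) = ∑ x ∈ s, min (a x) (b x) := by
  rcases h with h | h
  · rw [min_eq_left (Finset.sum_le_sum h)]
    exact Finset.sum_congr rfl fun x hx => (min_eq_left (h x hx)).symm
  · rw [min_eq_right (Finset.sum_le_sum h)]
    exact Finset.sum_congr rfl fun x hx => (min_eq_right (h x hx)).symm

/-- A deterministic map preserves the Bayes error rate when it is injective, and more
generally when it never identifies a point of the strict class-1 region with a point of
the strict class-2 region. -/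
theorem bayes_error_deterministic_map {X Y : Type*} [Fintype X] [Fintype Y]
    [DecidableEq Y]
    (P1 P2 : ℝ) (hP1 : 0 ≤ P1) (hP2 : 0 ≤ P2) (hP : P1 + P2 = 1)
    (pX1 pX2 : X → ℝ) (h1 : ∀ x, 0 ≤ pX1 x) (h2 : ∀ x, 0 ≤ pX2 x)
    (hs1 : ∑ x, pX1 x = 1) (hs2 : ∑ x, pX2 x = 1)
    (f : X → Y) :
    (Function.Injective f →
      ∑ y, min (P1 * ∑ x, (if f x = y then pX1 x else 0))
               (P2 * ∑ x, (if f x = y then pX2 x else 0))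
        = ∑ x, min (P1 * pX1 x) (P2 * pX2 x))
    ∧ ((∀ x₁ x₂, P2 * pX2 x₁ < P1 * pX1 x₁ → P1 * pX1 x₂ < P2 * pX2 x₂ →
          f x₁ ≠ f x₂) →
      ∑ y, min (P1 * ∑ x, (if f x = y then pX1 x else 0))
               (P2 * ∑ x, (if f x = y then pX2 x else 0))
        = ∑ x, min (P1 * pX1 x) (P2 * pX2 x)) := by
  have main : (∀ x₁ x₂, P2 * pX2 x₁ < P1 * pX1 x₁ → P1 * pX1 x₂ < P2 * pX2 x₂ →
          f x₁ ≠ f x₂) →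
      ∑ y, min (P1 * ∑ x, (if f x = y then pX1 x else 0))
               (P2 * ∑ x, (if f x = y then pX2 x else 0))
        = ∑ x, min (P1 * pX1 x) (P2 * pX2 x) := by
    intro hsep
    have key : ∀ y, min (P1 * ∑ x, (if f x = y then pX1 x else 0))
               (P2 * ∑ x, (if f x = y then pX2 x else 0))
        = ∑ x ∈ Finset.univ.filter (fun x => f x = y),
            min (P1 * pX1 x) (P2 * pX2 x) := by
      intro y
      have e1 : P1 * ∑ x, (if f x = y then pX1 x else 0)
          = ∑ x ∈ Finset.univ.filter (fun x => f x = y), P1 * pX1 x := by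
        rw [Finset.mul_sum, Finset.sum_filter]
        congr 1; ext x; split <;> simp
      have e2 : P2 * ∑ x, (if f x = y then pX2 x else 0)
          = ∑ x ∈ Finset.univ.filter (fun x => f x = y), P2 * pX2 x := by
        rw [Finset.mul_sum, Finset.sum_filter]
        congr 1; ext x; split <;> simp
      rw [e1, e2]
      apply min_sum_eq
      by_cases hcase : ∃ x ∈ Finset.univ.filter (fun x => f x = y),
          P2 * pX2 x < P1 * pX1 x
      · right
        obtain ⟨x₀, hx₀, hlt⟩ := hcase
        intro x hx
        by_contra hbad
        push_neg at hbad
        exact hsep x₀ x hlt hbad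
          ((Finset.mem_filter.mp hx₀).2.trans (Finset.mem_filter.mp hx).2.symm)
      · left
        intro x hx
        push_neg at hcase
        exact hcase x hx
    rw [Finset.sum_congr rfl fun y _ => key y]
    exact Finset.sum_fiberwise _ _ _
  refine ⟨fun hinj => main ?_, main⟩
  intro x₁ x₂ hlt1 hlt2 heq
  have := hinj heq
  subst this
  exact absurd (hlt1.trans hlt2) (lt_irrefl _)
end

section
/- The CDP function is jointly convex: if d(p, ·) is convex in its second argument, then for all λ ∈ [0,1] and all (D₁,P₁), (D₂,P₂) with nonempty feasible sets, λ·C(D₁,P₁) + (1−λ)·C(D₂,P₂) ≥ C(λD₁+(1−λ)D₂, λP₁+(1−λ)P₂). -/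
/-- The set of achievable fixed-classifier error rates of the restored signal, over
restoration kernels `r` satisfying the distortion constraint `≤ D` and the perceptual
constraint `≤ P`. -/
noncomputable def cdpSet {X Y Xh : Type*} [Fintype X] [Fintype Y] [Fintype Xh]
    (P1 P2 : ℝ) (pX1 pX2 : X → ℝ) (K : Y → X → ℝ)
    (R0 : Set Xh) (Δ : X → Xh → ℝ) (d : (X → ℝ) → (Xh → ℝ) → ℝ)
    (D P : ℝ) : Set ℝ :=
  {e : ℝ | ∃ r : Xh → Y → ℝ,
    (∀ a y, 0 ≤ r a y) ∧ (∀ y, ∑ a, r a y = 1) ∧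
    (∑ x, ∑ y, ∑ a, (P1 * pX1 x + P2 * pX2 x) * K y x * r a y * Δ x a) ≤ D ∧
    d (fun x => P1 * pX1 x + P2 * pX2 x)
      (fun a => ∑ y, ∑ x, r a y * K y x * (P1 * pX1 x + P2 * pX2 x)) ≤ P ∧
    e = P2 * ∑ a, R0.indicator (fun a => ∑ y, ∑ x, r a y * K y x * pX2 x) a
      + P1 * ∑ a, R0ᶜ.indicator (fun a => ∑ y, ∑ x, r a y * K y x * pX1 x) a}

lemma indicator_mix {Xh : Type*} (s : Set Xh) (lam : ℝ) (g1 g2 : Xh → ℝ) (a : Xh) :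
    s.indicator (fun a => lam * g1 a + (1 - lam) * g2 a) a
      = lam * s.indicator g1 a + (1 - lam) * s.indicator g2 a := by
  by_cases h : a ∈ s <;> simp [Set.indicator_apply, h]

/-- The CDP function is jointly convex in `(D, P)` when `d(p_X, ·)` is convex. -/
theorem cdp_convex {X Y Xh : Type*} [Fintype X] [Fintype Y] [Fintype Xh]
    (P1 P2 : ℝ) (hP1 : 0 ≤ P1) (hP2 : 0 ≤ P2) (hP : P1 + P2 = 1)
    (pX1 pX2 : X → ℝ) (h1 : ∀ x, 0 ≤ pX1 x) (h2 : ∀ x, 0 ≤ pX2 x)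
    (hs1 : ∑ x, pX1 x = 1) (hs2 : ∑ x, pX2 x = 1)
    (K : Y → X → ℝ) (hK : ∀ y x, 0 ≤ K y x) (hKs : ∀ x, ∑ y, K y x = 1)
    (R0 : Set Xh) (Δ : X → Xh → ℝ) (hΔ : ∀ x a, 0 ≤ Δ x a)
    (d : (X → ℝ) → (Xh → ℝ) → ℝ)
    (hconv : ConvexOn ℝ Set.univ (d (fun x => P1 * pX1 x + P2 * pX2 x)))
    (lam : ℝ) (hlam0 : 0 ≤ lam) (hlam1 : lam ≤ 1)
    (D1 Q1 D2 Q2 : ℝ)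
    (hne1 : (cdpSet P1 P2 pX1 pX2 K R0 Δ d D1 Q1).Nonempty)
    (hne2 : (cdpSet P1 P2 pX1 pX2 K R0 Δ d D2 Q2).Nonempty) :
    lam * sInf (cdpSet P1 P2 pX1 pX2 K R0 Δ d D1 Q1)
      + (1 - lam) * sInf (cdpSet P1 P2 pX1 pX2 K R0 Δ d D2 Q2)
    ≥ sInf (cdpSet P1 P2 pX1 pX2 K R0 Δ d
        (lam * D1 + (1 - lam) * D2) (lam * Q1 + (1 - lam) * Q2)) := by
  have hlam1' : (0:ℝ) ≤ 1 - lam := by linarith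
  set Smix := cdpSet P1 P2 pX1 pX2 K R0 Δ d
      (lam * D1 + (1 - lam) * D2) (lam * Q1 + (1 - lam) * Q2) with hSmix
  set S1 := cdpSet P1 P2 pX1 pX2 K R0 Δ d D1 Q1 with hS1
  set S2 := cdpSet P1 P2 pX1 pX2 K R0 Δ d D2 Q2 with hS2
  -- any element of each cdpSet is nonnegative
  have hnn : ∀ D P e, e ∈ cdpSet P1 P2 pX1 pX2 K R0 Δ d D P → 0 ≤ e := by
    rintro D P e ⟨r, hr0, -, -, -, rfl⟩
    have key : ∀ (s : Set Xh) (p : X → ℝ), (∀ x, 0 ≤ p x) →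
        0 ≤ ∑ a, s.indicator (fun a => ∑ y, ∑ x, r a y * K y x * p x) a := by
      intro s p hp
      refine Finset.sum_nonneg fun a _ => Set.indicator_nonneg (fun a _ => ?_) a
      refine Finset.sum_nonneg fun y _ => Finset.sum_nonneg fun x _ =>
        mul_nonneg (mul_nonneg (hr0 a y) (hK y x)) (hp x)
    have := key R0 pX2 h2
    have := key R0ᶜ pX1 h1
    positivity
  -- key mixing lemma
  have hmix : ∀ e1 ∈ S1, ∀ e2 ∈ S2, lam * e1 + (1 - lam) * e2 ∈ Smix := by
    rintro e1 ⟨r1, hr1p, hr1s, hd1, hp1, rfl⟩ e2 ⟨r2, hr2p, hr2s, hd2, hp2, rfl⟩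
    refine ⟨fun a y => lam * r1 a y + (1 - lam) * r2 a y, ?_, ?_, ?_, ?_, ?_⟩
    · intro a y
      exact add_nonneg (mul_nonneg hlam0 (hr1p a y)) (mul_nonneg hlam1' (hr2p a y))
    · intro y
      simp [Finset.sum_add_distrib, ← Finset.mul_sum, hr1s y, hr2s y]
    · have heq : (∑ x, ∑ y, ∑ a, (P1 * pX1 x + P2 * pX2 x) * K y x *
            (lam * r1 a y + (1 - lam) * r2 a y) * Δ x a)
          = lam * (∑ x, ∑ y, ∑ a, (P1 * pX1 x + P2 * pX2 x) * K y x * r1 a y * Δ x a)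
            + (1 - lam) * (∑ x, ∑ y, ∑ a, (P1 * pX1 x + P2 * pX2 x) * K y x * r2 a y * Δ x a) := by
        simp only [Finset.mul_sum, ← Finset.sum_add_distrib]
        exact Finset.sum_congr rfl fun x _ => Finset.sum_congr rfl fun y _ =>
          Finset.sum_congr rfl fun a _ => by ring
      rw [heq]
      exact add_le_add (mul_le_mul_of_nonneg_left hd1 hlam0)
        (mul_le_mul_of_nonneg_left hd2 hlam1')
    · set pX := fun x => P1 * pX1 x + P2 * pX2 x with hpX
      set f1 := fun a => ∑ y, ∑ x, r1 a y * K y x * pX x with hf1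
      set f2 := fun a => ∑ y, ∑ x, r2 a y * K y x * pX x with hf2
      have heq : (fun a => ∑ y, ∑ x, (lam * r1 a y + (1 - lam) * r2 a y) * K y x * pX x)
          = lam • f1 + (1 - lam) • f2 := by
        funext a
        simp only [Pi.add_apply, Pi.smul_apply, smul_eq_mul, hf1, hf2, Finset.mul_sum,
          ← Finset.sum_add_distrib]
        exact Finset.sum_congr rfl fun y _ => Finset.sum_congr rfl fun x _ => by ring
      rw [heq]
      calc d pX (lam • f1 + (1 - lam) • f2)
          ≤ lam * d pX f1 + (1 - lam) * d pX f2 :=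
            hconv.2 (Set.mem_univ f1) (Set.mem_univ f2) hlam0 hlam1' (by ring)
        _ ≤ lam * Q1 + (1 - lam) * Q2 :=
            add_le_add (mul_le_mul_of_nonneg_left hp1 hlam0)
              (mul_le_mul_of_nonneg_left hp2 hlam1')
    · have key : ∀ (s : Set Xh) (p : X → ℝ),
          (∑ a, s.indicator (fun a => ∑ y, ∑ x,
              (lam * r1 a y + (1 - lam) * r2 a y) * K y x * p x) a)
            = lam * (∑ a, s.indicator (fun a => ∑ y, ∑ x, r1 a y * K y x * p x) a)
              + (1 - lam) * (∑ a, s.indicator (fun a => ∑ y, ∑ x, r2 a y * K y x * p x) a) := by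
        intro s p
        have hfun : (fun a => ∑ y, ∑ x, (lam * r1 a y + (1 - lam) * r2 a y) * K y x * p x)
            = fun a => lam * (∑ y, ∑ x, r1 a y * K y x * p x)
                + (1 - lam) * (∑ y, ∑ x, r2 a y * K y x * p x) := by
          funext a
          simp only [Finset.mul_sum, ← Finset.sum_add_distrib]
          exact Finset.sum_congr rfl fun y _ => Finset.sum_congr rfl fun x _ => by ring
        rw [hfun]
        simp only [indicator_mix]
        rw [Finset.sum_add_distrib, ← Finset.mul_sum, ← Finset.mul_sum]
      rw [key R0 pX2, key R0ᶜ pX1]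
      ring
  -- sets are bounded below by 0
  have hbmix : BddBelow Smix := ⟨0, fun e he => hnn _ _ e he⟩
  have hb1 : BddBelow S1 := ⟨0, fun e he => hnn _ _ e he⟩
  have hb2 : BddBelow S2 := ⟨0, fun e he => hnn _ _ e he⟩
  rw [ge_iff_le, le_iff_forall_pos_le_add]
  intro ε hε
  obtain ⟨e1, he1, hlt1⟩ := Real.lt_sInf_add_pos hne1 (half_pos hε)
  obtain ⟨e2, he2, hlt2⟩ := Real.lt_sInf_add_pos hne2 (half_pos hε)
  have hmem := hmix e1 he1 e2 he2
  have h3 : sInf Smix ≤ lam * e1 + (1 - lam) * e2 := csInf_le hbmix hmem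
  have h4 : lam * e1 ≤ lam * (sInf S1 + ε / 2) :=
    mul_le_mul_of_nonneg_left hlt1.le hlam0
  have h5 : (1 - lam) * e2 ≤ (1 - lam) * (sInf S2 + ε / 2) :=
    mul_le_mul_of_nonneg_left hlt2.le hlam1'
  nlinarith [h3, h4, h5]
end

section
/- If the degradation kernel p(y|x) satisfies the no-mixing condition (for all x₁ with P₁p_{X1}(x₁) > P₂p_{X2}(x₁), all x₂ with P₁p_{X1}(x₂) < P₂p_{X2}(x₂), and all y, p(y|x₁)p(y|x₂) = 0), then ε*(Y) = ε*(X): information may be lost but classification performance is unaffected. -/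
lemma min_sum_key {X : Type*} [Fintype X] (a b k : X → ℝ) (hk : ∀ x, 0 ≤ k x)
    (hnm : ∀ x₁ x₂, b x₁ < a x₁ → a x₂ < b x₂ → k x₁ * k x₂ = 0) :
    min (∑ x, k x * a x) (∑ x, k x * b x) = ∑ x, k x * min (a x) (b x) := by
  by_cases h : ∃ x₁, b x₁ < a x₁ ∧ k x₁ ≠ 0
  · obtain ⟨x₁, hlt, hne⟩ := h
    have hz : ∀ x₂, a x₂ < b x₂ → k x₂ = 0 := fun x₂ h2 => by
      rcases mul_eq_zero.1 (hnm x₁ x₂ hlt h2) with h' | h'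
      · exact absurd h' hne
      · exact h'
    have e : ∀ x, k x * min (a x) (b x) = k x * b x := fun x => by
      rcases lt_or_ge (a x) (b x) with h' | h'
      · rw [hz x h']; ring
      · rw [min_eq_right h']
    have hle : ∑ x, k x * b x ≤ ∑ x, k x * a x := by
      apply Finset.sum_le_sum fun x _ => ?_
      rcases lt_or_ge (a x) (b x) with h' | h'
      · rw [hz x h']; ring_nf; exact le_refl 0
      · exact mul_le_mul_of_nonneg_left h' (hk x)
    rw [min_eq_right hle]
    exact (Finset.sum_congr rfl fun x _ => e x).symm
  · push_neg at h
    have e : ∀ x, k x * min (a x) (b x) = k x * a x := fun x => by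
      rcases lt_or_ge (b x) (a x) with h' | h'
      · rw [h x h']; ring
      · rw [min_eq_left h']
    have hle : ∑ x, k x * a x ≤ ∑ x, k x * b x := by
      apply Finset.sum_le_sum fun x _ => ?_
      rcases lt_or_ge (b x) (a x) with h' | h'
      · rw [h x h']; ring_nf; exact le_refl 0
      · exact mul_le_mul_of_nonneg_left h' (hk x)
    rw [min_eq_left hle]
    exact (Finset.sum_congr rfl fun x _ => e x).symm

/-- If the degradation kernel never mixes the two strict decision regions, then the
Bayes error rate is preserved: `ε*(Y) = ε*(X)`. -/
theorem bayes_error_preserved_of_no_mixing {X Y : Type*} [Fintype X] [Fintype Y]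
    (P1 P2 : ℝ) (hP1 : 0 ≤ P1) (hP2 : 0 ≤ P2) (hP : P1 + P2 = 1)
    (pX1 pX2 : X → ℝ) (h1 : ∀ x, 0 ≤ pX1 x) (h2 : ∀ x, 0 ≤ pX2 x)
    (hs1 : ∑ x, pX1 x = 1) (hs2 : ∑ x, pX2 x = 1)
    (K : Y → X → ℝ) (hK : ∀ y x, 0 ≤ K y x) (hKs : ∀ x, ∑ y, K y x = 1)
    (hnomix : ∀ x₁ x₂ y, P2 * pX2 x₁ < P1 * pX1 x₁ → P1 * pX1 x₂ < P2 * pX2 x₂ →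
      K y x₁ * K y x₂ = 0) :
    ∑ y, min (P1 * ∑ x, K y x * pX1 x) (P2 * ∑ x, K y x * pX2 x)
      = ∑ x, min (P1 * pX1 x) (P2 * pX2 x) := by
  have step : ∀ y : Y, min (P1 * ∑ x, K y x * pX1 x) (P2 * ∑ x, K y x * pX2 x)
      = ∑ x, K y x * min (P1 * pX1 x) (P2 * pX2 x) := fun y => by
    have e1 : P1 * ∑ x, K y x * pX1 x = ∑ x, K y x * (P1 * pX1 x) := by
      rw [Finset.mul_sum]; exact Finset.sum_congr rfl fun x _ => by ring
    have e2 : P2 * ∑ x, K y x * pX2 x = ∑ x, K y x * (P2 * pX2 x) := by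
      rw [Finset.mul_sum]; exact Finset.sum_congr rfl fun x _ => by ring
    rw [e1, e2]
    exact min_sum_key _ _ _ (fun x => hK y x) (fun x₁ x₂ hgt hlt => hnomix x₁ x₂ y hgt hlt)
  rw [Finset.sum_congr rfl fun y _ => step y, Finset.sum_comm]
  exact Finset.sum_congr rfl fun x _ => by rw [← Finset.sum_mul, hKs x, one_mul]
end
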